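/- There is a geometry-dependent turning gain: for L, T > 0 there exists a constant C ∈ ℝ (depending only on L, T, W) such that for every pair of track speeds S_r, S_l ∈ ℝ, the point ((S_r + S_l)/2, 0, C·(S_r − S_l)) is a global minimizer over ℝ³ of (ẋ, ẏ, θ̇) ↦ D(ẋ, ẏ, θ̇, S_r, S_l). In other words, the quasi-static model behaves exactly like a differential-drive vehicle with angular velocity linear in the difference of track speeds. -/
import Mathlib

open MeasureTheory

/-- Flat-ground power dissipation function of a tracked vehicle. -/
noncomputable def flatD (L T W : ℝ) (xd yd td Sr Sl : ℝ) : ℝ :=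
  (∫ ry in (-T)..T, ∫ rx in (-L)..L,
    Real.sqrt ((xd + (W - ry) * td - Sr) ^ 2 + (yd + rx * td) ^ 2)) +
  (∫ ly in (-T)..T, ∫ lx in (-L)..L,
    Real.sqrt ((xd - (W + ly) * td - Sl) ^ 2 + (yd + lx * td) ^ 2))

namespace FlatDAux

/-- inner integral -/
noncomputable def inn (L u b t : ℝ) : ℝ :=
  ∫ x in (-L)..L, Real.sqrt (u ^ 2 + (b + x * t) ^ 2)

lemma flatD_eq (L T W a b t Sr Sl : ℝ) :
    flatD L T W a b t Sr Sl =
      (∫ y in (-T)..T, inn L (a + (W - y) * t - Sr) b t) +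
      (∫ y in (-T)..T, inn L (a - (W + y) * t - Sl) b t) := rfl

lemma contf (u b t : ℝ) : Continuous fun x : ℝ => Real.sqrt (u ^ 2 + (b + x * t) ^ 2) :=
  Real.continuous_sqrt.comp (by fun_prop)

lemma cont_inn (L : ℝ) : Continuous fun p : ℝ × ℝ × ℝ => inn L p.1 p.2.1 p.2.2 := by
  have h : Continuous (Function.uncurry fun (p : ℝ × ℝ × ℝ) (x : ℝ) =>
      Real.sqrt (p.1 ^ 2 + (p.2.1 + x * p.2.2) ^ 2)) :=
    Real.continuous_sqrt.comp (by fun_prop)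
  exact intervalIntegral.continuous_parametric_intervalIntegral_of_continuous' h (-L) L

lemma inn_nonneg (L u b t : ℝ) (hL : 0 < L) : 0 ≤ inn L u b t :=
  intervalIntegral.integral_nonneg (by linarith) (fun x _ => Real.sqrt_nonneg _)

lemma sqrt_tri (u1 v1 u2 v2 : ℝ) :
    Real.sqrt (((u1 + u2) / 2) ^ 2 + ((v1 + v2) / 2) ^ 2) ≤
      (Real.sqrt (u1 ^ 2 + v1 ^ 2) + Real.sqrt (u2 ^ 2 + v2 ^ 2)) / 2 := by
  set A := Real.sqrt (u1 ^ 2 + v1 ^ 2) with hAdef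
  set B := Real.sqrt (u2 ^ 2 + v2 ^ 2) with hBdef
  have hA : 0 ≤ A := Real.sqrt_nonneg _
  have hB : 0 ≤ B := Real.sqrt_nonneg _
  have hA2 : A ^ 2 = u1 ^ 2 + v1 ^ 2 := Real.sq_sqrt (by positivity)
  have hB2 : B ^ 2 = u2 ^ 2 + v2 ^ 2 := Real.sq_sqrt (by positivity)
  have cauchy : u1 * u2 + v1 * v2 ≤ A * B := by
    have h1 : |u1 * u2 + v1 * v2| = Real.sqrt ((u1 * u2 + v1 * v2) ^ 2) :=
      (Real.sqrt_sq_eq_abs _).symm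
    have h2 : A * B = Real.sqrt ((u1 ^ 2 + v1 ^ 2) * (u2 ^ 2 + v2 ^ 2)) := by
      rw [hAdef, hBdef, ← Real.sqrt_mul (by positivity)]
    have h3 : (u1 * u2 + v1 * v2) ^ 2 ≤ (u1 ^ 2 + v1 ^ 2) * (u2 ^ 2 + v2 ^ 2) := by
      nlinarith [sq_nonneg (u1 * v2 - u2 * v1)]
    calc u1 * u2 + v1 * v2 ≤ |u1 * u2 + v1 * v2| := le_abs_self _
      _ = Real.sqrt ((u1 * u2 + v1 * v2) ^ 2) := h1
      _ ≤ A * B := by rw [h2]; exact Real.sqrt_le_sqrt h3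
  have hgoal : ((u1 + u2) / 2) ^ 2 + ((v1 + v2) / 2) ^ 2 ≤ ((A + B) / 2) ^ 2 := by
    nlinarith
  calc Real.sqrt (((u1 + u2) / 2) ^ 2 + ((v1 + v2) / 2) ^ 2)
      ≤ Real.sqrt (((A + B) / 2) ^ 2) := Real.sqrt_le_sqrt hgoal
    _ = (A + B) / 2 := Real.sqrt_sq (by positivity)

lemma inn_mid (L : ℝ) (hL : 0 < L) (u1 b1 u2 b2 t : ℝ) :
    inn L ((u1 + u2) / 2) ((b1 + b2) / 2) t ≤ (inn L u1 b1 t + inn L u2 b2 t) / 2 := by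
  have h1 : IntervalIntegrable (fun x : ℝ => Real.sqrt (u1 ^ 2 + (b1 + x * t) ^ 2))
      volume (-L) L := (contf u1 b1 t).intervalIntegrable (-L) L
  have h2 : IntervalIntegrable (fun x : ℝ => Real.sqrt (u2 ^ 2 + (b2 + x * t) ^ 2))
      volume (-L) L := (contf u2 b2 t).intervalIntegrable (-L) L
  have hm : IntervalIntegrable
      (fun x : ℝ => Real.sqrt (((u1 + u2) / 2) ^ 2 + ((b1 + b2) / 2 + x * t) ^ 2))
      volume (-L) L := (contf ((u1 + u2) / 2) ((b1 + b2) / 2) t).intervalIntegrable (-L) L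
  have key : inn L ((u1 + u2) / 2) ((b1 + b2) / 2) t ≤
      ∫ x in (-L)..L,
        (Real.sqrt (u1 ^ 2 + (b1 + x * t) ^ 2) + Real.sqrt (u2 ^ 2 + (b2 + x * t) ^ 2)) / 2 := by
    apply intervalIntegral.integral_mono_on (by linarith) hm ((h1.add h2).div_const 2)
    intro x _
    have h := sqrt_tri u1 (b1 + x * t) u2 (b2 + x * t)
    have e1 : (b1 + b2) / 2 + x * t = ((b1 + x * t) + (b2 + x * t)) / 2 := by ring
    rw [e1]; exact h
  calc inn L ((u1 + u2) / 2) ((b1 + b2) / 2) t ≤ _ := key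
    _ = (inn L u1 b1 t + inn L u2 b2 t) / 2 := by
      rw [intervalIntegral.integral_div, intervalIntegral.integral_add h1 h2]; rfl

lemma inn_negu (L u b t : ℝ) : inn L (-u) b t = inn L u b t := by
  unfold inn
  congr 1
  funext x
  congr 1
  ring

lemma inn_negb (L u b t : ℝ) : inn L u (-b) t = inn L u b t := by
  have h := intervalIntegral.integral_comp_neg (a := -L) (b := L)
    (f := fun x => Real.sqrt (u ^ 2 + (b + x * t) ^ 2))
  rw [neg_neg] at h
  unfold inn
  rw [← h]
  congr 1
  funext x
  congr 1
  ring

lemma inn_negt (L u b t : ℝ) : inn L u b (-t) = inn L u b t := by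
  have h := intervalIntegral.integral_comp_neg (a := -L) (b := L)
    (f := fun x => Real.sqrt (u ^ 2 + (b + x * t) ^ 2))
  rw [neg_neg] at h
  unfold inn
  rw [← h]
  congr 1
  funext x
  congr 1
  ring

lemma integral_comp_neg_TT {T : ℝ} (g : ℝ → ℝ) :
    (∫ y in (-T)..T, g (-y)) = ∫ y in (-T)..T, g y := by
  have h := intervalIntegral.integral_comp_neg (a := -T) (b := T) (f := g)
  rwa [neg_neg] at h

lemma flatD_reflect (L T W a b e Sr Sl : ℝ) :
    flatD L T W (Sr + Sl - a) (-b) e Sr Sl = flatD L T W a b e Sr Sl := by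
  rw [flatD_eq, flatD_eq, add_comm]
  congr 1
  · -- left-new = right-old
    rw [← integral_comp_neg_TT (fun y => inn L (a + (W - y) * e - Sr) b e)]
    congr 1
    funext y
    rw [show Sr + Sl - a - (W + y) * e - Sl = -(a + (W - -y) * e - Sr) + (2*y)*e - (2*y)*e
      from by ring]
    rw [show -(a + (W - -y) * e - Sr) + (2*y)*e - (2*y)*e = -(a + (W - -y) * e - Sr)
      from by ring]
    rw [inn_negu, inn_negb]
  · -- right-new = left-old
    rw [← integral_comp_neg_TT (fun y => inn L (a - (W + y) * e - Sl) b e)]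
    congr 1
    funext y
    rw [show Sr + Sl - a + (W - y) * e - Sr = -(a - (W + -y) * e - Sl) from by ring]
    rw [inn_negu, inn_negb]

lemma flatD_swap (L T W a b e Sr Sl : ℝ) :
    flatD L T W a b (-e) Sl Sr = flatD L T W a b e Sr Sl := by
  rw [flatD_eq, flatD_eq, add_comm]
  congr 1
  · -- left-of-swapped = right-old
    rw [← integral_comp_neg_TT (fun y => inn L (a + (W - y) * e - Sr) b e)]
    congr 1
    funext y
    rw [show a - (W + y) * -e - Sr = a + (W - -y) * e - Sr from by ring, inn_negt]
  · rw [← integral_comp_neg_TT (fun y => inn L (a - (W + y) * e - Sl) b e)]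
    congr 1
    funext y
    rw [show a + (W - y) * -e - Sl = a - (W + -y) * e - Sl from by ring, inn_negt]

lemma flatD_translate (L T W a b e Sr Sl c : ℝ) :
    flatD L T W (a + c) b e (Sr + c) (Sl + c) = flatD L T W a b e Sr Sl := by
  rw [flatD_eq, flatD_eq]
  congr 1 <;>
  · congr 1
    funext y
    congr 1
    ring

lemma inn_scale (L u b t l : ℝ) (hl : 0 ≤ l) :
    inn L (l * u) (l * b) (l * t) = l * inn L u b t := by
  unfold inn
  rw [← intervalIntegral.integral_const_mul]
  congr 1
  funext x
  rw [show (l * u) ^ 2 + (l * b + x * (l * t)) ^ 2 = l ^ 2 * (u ^ 2 + (b + x * t) ^ 2)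
    from by ring]
  rw [Real.sqrt_mul (sq_nonneg l), Real.sqrt_sq hl]

lemma flatD_scale (L T W a b e Sr Sl l : ℝ) (hl : 0 ≤ l) :
    flatD L T W (l * a) (l * b) (l * e) (l * Sr) (l * Sl) = l * flatD L T W a b e Sr Sl := by
  rw [flatD_eq, flatD_eq, mul_add]
  congr 1 <;>
  · rw [← intervalIntegral.integral_const_mul]
    congr 1
    funext y
    rw [← inn_scale _ _ _ _ _ hl]
    congr 1
    ring

lemma cont_inn_comp (L : ℝ) {f g h : ℝ → ℝ} (hf : Continuous f) (hg : Continuous g)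
    (hh : Continuous h) : Continuous fun y => inn L (f y) (g y) (h y) := by
  have heq : (fun y => inn L (f y) (g y) (h y)) =
      (fun p : ℝ × ℝ × ℝ => inn L p.1 p.2.1 p.2.2) ∘ fun y => (f y, g y, h y) := rfl
  rw [heq]
  exact (cont_inn L).comp (hf.prodMk (hg.prodMk hh))

lemma flatD_nonneg (L T W : ℝ) (hL : 0 < L) (hT : 0 < T) (a b e Sr Sl : ℝ) :
    0 ≤ flatD L T W a b e Sr Sl := by
  rw [flatD_eq]
  have h1 : 0 ≤ ∫ y in (-T)..T, inn L (a + (W - y) * e - Sr) b e :=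
    intervalIntegral.integral_nonneg (by linarith) fun y _ => inn_nonneg _ _ _ _ hL
  have h2 : 0 ≤ ∫ y in (-T)..T, inn L (a - (W + y) * e - Sl) b e :=
    intervalIntegral.integral_nonneg (by linarith) fun y _ => inn_nonneg _ _ _ _ hL
  linarith

lemma inn_lb (L u b t : ℝ) (hL : 0 < L) : 2 * L * |u| ≤ inn L u b t := by
  have hc : IntervalIntegrable (fun _ : ℝ => |u|) volume (-L) L := intervalIntegrable_const
  have hi : IntervalIntegrable (fun x : ℝ => Real.sqrt (u ^ 2 + (b + x * t) ^ 2))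
      volume (-L) L := (contf u b t).intervalIntegrable _ _
  have h : (∫ _ in (-L)..L, |u|) ≤ inn L u b t := by
    apply intervalIntegral.integral_mono_on (by linarith) hc hi
    intro x _
    rw [← Real.sqrt_sq_eq_abs]
    exact Real.sqrt_le_sqrt (by nlinarith [sq_nonneg (b + x * t)])
  calc 2 * L * |u| = ∫ _ in (-L)..L, |u| := by
        rw [intervalIntegral.integral_const, smul_eq_mul]; ring
    _ ≤ inn L u b t := h

lemma m_lb (L T W : ℝ) (hL : 0 < L) (hT : 0 < T) (hW : 0 < W) (e : ℝ) :
    4 * T * L * (W * |e| - 1) ≤ flatD L T W 0 0 e 1 (-1) := by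
  rw [flatD_eq]
  have hleft : 0 ≤ ∫ y in (-T)..T, inn L (0 - (W + y) * e - (-1)) 0 e :=
    intervalIntegral.integral_nonneg (by linarith) fun y _ => inn_nonneg _ _ _ _ hL
  have habs : IntervalIntegrable (fun y : ℝ => 2 * L * |0 + (W - y) * e - 1|) volume (-T) T :=
    (Continuous.intervalIntegrable (by fun_prop) _ _)
  have hinn : IntervalIntegrable (fun y : ℝ => inn L (0 + (W - y) * e - 1) 0 e) volume (-T) T :=
    Continuous.intervalIntegrable
      (cont_inn_comp L (by fun_prop) continuous_const continuous_const) _ _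
  have h1 : (∫ y in (-T)..T, 2 * L * |0 + (W - y) * e - 1|) ≤
      ∫ y in (-T)..T, inn L (0 + (W - y) * e - 1) 0 e := by
    apply intervalIntegral.integral_mono_on (by linarith) habs hinn
    intro y _
    exact inn_lb _ _ _ _ hL
  have h2 : (∫ y in (-T)..T, 2 * L * |0 + (W - y) * e - 1|) =
      2 * L * ∫ y in (-T)..T, |0 + (W - y) * e - 1| :=
    intervalIntegral.integral_const_mul _ _
  have h3 : |∫ y in (-T)..T, (0 + (W - y) * e - 1)| ≤
      ∫ y in (-T)..T, |0 + (W - y) * e - 1| :=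
    intervalIntegral.abs_integral_le_integral_abs (by linarith)
  have h4 : (∫ y in (-T)..T, (0 + (W - y) * e - 1)) = 2 * T * (W * e - 1) := by
    have hi1 : IntervalIntegrable (fun _ : ℝ => W * e - 1) volume (-T) T :=
      intervalIntegrable_const
    have hi2 : IntervalIntegrable (fun y : ℝ => -e * y) volume (-T) T :=
      Continuous.intervalIntegrable (by fun_prop) _ _
    have : (∫ y in (-T)..T, (0 + (W - y) * e - 1)) =
        ∫ y in (-T)..T, ((W * e - 1) + -e * y) := by
      congr 1; funext y; ring
    rw [this, intervalIntegral.integral_add hi1 hi2, intervalIntegral.integral_const,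
      intervalIntegral.integral_const_mul, integral_id, smul_eq_mul]
    ring
  have h5 : W * |e| - 1 ≤ |W * e - 1| := by
    have := abs_sub_abs_le_abs_sub (W * e) 1
    rw [abs_one, abs_mul, abs_of_pos hW] at this
    linarith
  have h6 : 2 * L * |2 * T * (W * e - 1)| = 4 * T * L * |W * e - 1| := by
    rw [abs_mul, abs_of_pos (by linarith : (0:ℝ) < 2 * T)]
    ring
  have hL2 : (0:ℝ) ≤ 2 * L := by linarith
  rw [h4] at h3
  have c1 := mul_le_mul_of_nonneg_left h3 hL2
  have c2 := mul_le_mul_of_nonneg_left h5 (show (0:ℝ) ≤ 4 * T * L by nlinarith)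
  linarith

lemma cont_m (L T W : ℝ) : Continuous fun e : ℝ => flatD L T W 0 0 e 1 (-1) := by
  have heq : (fun e : ℝ => flatD L T W 0 0 e 1 (-1)) = fun e : ℝ =>
      (∫ y in (-T)..T, inn L (0 + (W - y) * e - 1) 0 e) +
      (∫ y in (-T)..T, inn L (0 - (W + y) * e - (-1)) 0 e) := by
    funext e; exact flatD_eq L T W 0 0 e 1 (-1)
  rw [heq]
  have hf1 : Continuous (Function.uncurry fun (e y : ℝ) => inn L (0 + (W - y) * e - 1) 0 e) := by
    have heq2 : (Function.uncurry fun (e y : ℝ) => inn L (0 + (W - y) * e - 1) 0 e) =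
        (fun p : ℝ × ℝ × ℝ => inn L p.1 p.2.1 p.2.2) ∘
          fun q : ℝ × ℝ => (0 + (W - q.2) * q.1 - 1, (0 : ℝ), q.1) := rfl
    rw [heq2]
    exact (cont_inn L).comp (by fun_prop)
  have hf2 : Continuous
      (Function.uncurry fun (e y : ℝ) => inn L (0 - (W + y) * e - (-1)) 0 e) := by
    have heq2 : (Function.uncurry fun (e y : ℝ) => inn L (0 - (W + y) * e - (-1)) 0 e) =
        (fun p : ℝ × ℝ × ℝ => inn L p.1 p.2.1 p.2.2) ∘
          fun q : ℝ × ℝ => (0 - (W + q.2) * q.1 - (-1), (0 : ℝ), q.1) := rfl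
    rw [heq2]
    exact (cont_inn L).comp (by fun_prop)
  exact (intervalIntegral.continuous_parametric_intervalIntegral_of_continuous' hf1 (-T) T).add
    (intervalIntegral.continuous_parametric_intervalIntegral_of_continuous' hf2 (-T) T)

lemma exists_min (L T W : ℝ) (hL : 0 < L) (hT : 0 < T) (hW : 0 < W) :
    ∃ e0 : ℝ, ∀ e : ℝ, flatD L T W 0 0 e0 1 (-1) ≤ flatD L T W 0 0 e 1 (-1) := by
  set m : ℝ → ℝ := fun e => flatD L T W 0 0 e 1 (-1) with hm
  have hcont : Continuous m := cont_m L T W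
  set R : ℝ := (m 0 + 4 * T * L) / (4 * T * L * W) + 1 with hR
  have hTL : (0:ℝ) < 4 * T * L := by nlinarith
  have hTLW : (0:ℝ) < 4 * T * L * W := by nlinarith
  have hm0 : 0 ≤ m 0 := flatD_nonneg L T W hL hT 0 0 0 1 (-1)
  have hRpos : 0 < R := by
    rw [hR]; positivity
  obtain ⟨e0, he0mem, he0⟩ := (isCompact_Icc (a := -R) (b := R)).exists_isMinOn
    ⟨0, Set.mem_Icc.mpr ⟨by linarith, by linarith⟩⟩ hcont.continuousOn
  refine ⟨e0, fun e => ?_⟩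
  by_cases he : e ∈ Set.Icc (-R) R
  · exact he0 he
  · have habs : R < |e| := by
      rcases abs_cases e with ⟨h, _⟩ | ⟨h, _⟩ <;>
        (simp only [Set.mem_Icc, not_and_or, not_le] at he; rcases he with h' | h' <;> linarith)
    have hb := m_lb L T W hL hT hW e
    have hkey : m 0 < m e := by
      have : 4 * T * L * (W * R - 1) < 4 * T * L * (W * |e| - 1) := by
        apply mul_lt_mul_of_pos_left _ hTL
        have := mul_lt_mul_of_pos_left habs hW
        linarith
      have hval : 4 * T * L * (W * R - 1) = m 0 + 4 * T * L * W := by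
        rw [hR]; field_simp; ring
      have : m 0 < 4 * T * L * (W * |e| - 1) := by nlinarith
      linarith [hb]
    have h0mem : (0:ℝ) ∈ Set.Icc (-R) R := Set.mem_Icc.mpr ⟨by linarith, by linarith⟩
    exact le_trans (he0 h0mem) (le_of_lt hkey)

lemma flatD_mid (L T W : ℝ) (hL : 0 < L) (hT : 0 < T) (a1 b1 a2 b2 e Sr Sl : ℝ) :
    flatD L T W ((a1 + a2) / 2) ((b1 + b2) / 2) e Sr Sl ≤
      (flatD L T W a1 b1 e Sr Sl + flatD L T W a2 b2 e Sr Sl) / 2 := by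
  rw [flatD_eq, flatD_eq, flatD_eq]
  have i1 : IntervalIntegrable (fun y => inn L (a1 + (W - y) * e - Sr) b1 e) volume (-T) T :=
    Continuous.intervalIntegrable
      (cont_inn_comp L (by fun_prop) continuous_const continuous_const) _ _
  have i2 : IntervalIntegrable (fun y => inn L (a2 + (W - y) * e - Sr) b2 e) volume (-T) T :=
    Continuous.intervalIntegrable
      (cont_inn_comp L (by fun_prop) continuous_const continuous_const) _ _
  have im : IntervalIntegrable
      (fun y => inn L ((a1 + a2) / 2 + (W - y) * e - Sr) ((b1 + b2) / 2) e) volume (-T) T :=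
    Continuous.intervalIntegrable
      (cont_inn_comp L (by fun_prop) continuous_const continuous_const) _ _
  have j1 : IntervalIntegrable (fun y => inn L (a1 - (W + y) * e - Sl) b1 e) volume (-T) T :=
    Continuous.intervalIntegrable
      (cont_inn_comp L (by fun_prop) continuous_const continuous_const) _ _
  have j2 : IntervalIntegrable (fun y => inn L (a2 - (W + y) * e - Sl) b2 e) volume (-T) T :=
    Continuous.intervalIntegrable
      (cont_inn_comp L (by fun_prop) continuous_const continuous_const) _ _
  have jm : IntervalIntegrable
      (fun y => inn L ((a1 + a2) / 2 - (W + y) * e - Sl) ((b1 + b2) / 2) e) volume (-T) T :=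
    Continuous.intervalIntegrable
      (cont_inn_comp L (by fun_prop) continuous_const continuous_const) _ _
  have k1 : (∫ y in (-T)..T, inn L ((a1 + a2) / 2 + (W - y) * e - Sr) ((b1 + b2) / 2) e) ≤
      ((∫ y in (-T)..T, inn L (a1 + (W - y) * e - Sr) b1 e) +
        (∫ y in (-T)..T, inn L (a2 + (W - y) * e - Sr) b2 e)) / 2 := by
    have step : (∫ y in (-T)..T, inn L ((a1 + a2) / 2 + (W - y) * e - Sr) ((b1 + b2) / 2) e) ≤
        ∫ y in (-T)..T,
          (inn L (a1 + (W - y) * e - Sr) b1 e + inn L (a2 + (W - y) * e - Sr) b2 e) / 2 := by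
      apply intervalIntegral.integral_mono_on (by linarith) im ((i1.add i2).div_const 2)
      intro y _
      have h := inn_mid L hL (a1 + (W - y) * e - Sr) b1 (a2 + (W - y) * e - Sr) b2 e
      rw [show (a1 + a2) / 2 + (W - y) * e - Sr =
        ((a1 + (W - y) * e - Sr) + (a2 + (W - y) * e - Sr)) / 2 from by ring]
      exact h
    rwa [intervalIntegral.integral_div, intervalIntegral.integral_add i1 i2] at step
  have k2 : (∫ y in (-T)..T, inn L ((a1 + a2) / 2 - (W + y) * e - Sl) ((b1 + b2) / 2) e) ≤
      ((∫ y in (-T)..T, inn L (a1 - (W + y) * e - Sl) b1 e) +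
        (∫ y in (-T)..T, inn L (a2 - (W + y) * e - Sl) b2 e)) / 2 := by
    have step : (∫ y in (-T)..T, inn L ((a1 + a2) / 2 - (W + y) * e - Sl) ((b1 + b2) / 2) e) ≤
        ∫ y in (-T)..T,
          (inn L (a1 - (W + y) * e - Sl) b1 e + inn L (a2 - (W + y) * e - Sl) b2 e) / 2 := by
      apply intervalIntegral.integral_mono_on (by linarith) jm ((j1.add j2).div_const 2)
      intro y _
      have h := inn_mid L hL (a1 - (W + y) * e - Sl) b1 (a2 - (W + y) * e - Sl) b2 e
      rw [show (a1 + a2) / 2 - (W + y) * e - Sl =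
        ((a1 - (W + y) * e - Sl) + (a2 - (W + y) * e - Sl)) / 2 from by ring]
      exact h
    rwa [intervalIntegral.integral_div, intervalIntegral.integral_add j1 j2] at step
  linarith

end FlatDAux

open FlatDAux in
/-- there is a geometry-dependent turning gain C such that
((Sr+Sl)/2, 0, C·(Sr−Sl)) is always a global minimizer: the quasi-static model
behaves exactly like a differential-drive vehicle. -/
theorem flatD_differential_drive_gain (L T W : ℝ) (hL : 0 < L) (hT : 0 < T) (hW : 0 < W) :
    ∃ C : ℝ, ∀ Sr Sl : ℝ, ∀ a b e : ℝ,
      flatD L T W ((Sr + Sl) / 2) 0 (C * (Sr - Sl)) Sr Sl ≤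
        flatD L T W a b e Sr Sl := by
  obtain ⟨e0, he0⟩ := exists_min L T W hL hT hW
  refine ⟨e0 / 2, fun Sr Sl a b e => ?_⟩
  -- Step 2 : reduce to yd = 0, xd = (Sr+Sl)/2
  have step2 : flatD L T W ((Sr + Sl) / 2) 0 e Sr Sl ≤ flatD L T W a b e Sr Sl := by
    have hmid := flatD_mid L T W hL hT a b (Sr + Sl - a) (-b) e Sr Sl
    rw [flatD_reflect L T W a b e Sr Sl] at hmid
    rw [show (a + (Sr + Sl - a)) / 2 = (Sr + Sl) / 2 from by ring,
      show (b + -b) / 2 = (0:ℝ) from by ring] at hmid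
    linarith
  -- Step 1 : optimality in the angular velocity
  have tr : ∀ t : ℝ, flatD L T W ((Sr + Sl) / 2) 0 t Sr Sl =
      flatD L T W 0 0 t ((Sr - Sl) / 2) (-((Sr - Sl) / 2)) := by
    intro t
    have h := flatD_translate L T W 0 0 t ((Sr - Sl) / 2) (-((Sr - Sl) / 2)) ((Sr + Sl) / 2)
    rw [show (0:ℝ) + (Sr + Sl) / 2 = (Sr + Sl) / 2 from by ring,
      show (Sr - Sl) / 2 + (Sr + Sl) / 2 = Sr from by ring,
      show -((Sr - Sl) / 2) + (Sr + Sl) / 2 = Sl from by ring] at h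
    exact h
  have step1 : flatD L T W ((Sr + Sl) / 2) 0 (e0 / 2 * (Sr - Sl)) Sr Sl ≤
      flatD L T W ((Sr + Sl) / 2) 0 e Sr Sl := by
    rw [tr, tr]
    set σ : ℝ := (Sr - Sl) / 2 with hσ
    have h2σ : Sr - Sl = 2 * σ := by rw [hσ]; ring
    rcases lt_trichotomy σ 0 with hs | hs | hs
    · -- σ < 0 : swap tracks then rescale by -σ > 0
      have hne : σ ≠ 0 := ne_of_lt hs
      have sw : ∀ t : ℝ, flatD L T W 0 0 t σ (-σ) = flatD L T W 0 0 (-t) (-σ) σ := by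
        intro t
        have h := flatD_swap L T W 0 0 (-t) (-σ) σ
        rw [neg_neg] at h
        exact h
      have sc : ∀ t : ℝ, flatD L T W 0 0 t (-σ) σ =
          -σ * flatD L T W 0 0 (t / (-σ)) 1 (-1) := by
        intro t
        have h := flatD_scale L T W 0 0 (t / (-σ)) 1 (-1) (-σ) (by linarith)
        rw [mul_zero, mul_one,
          show -σ * (t / (-σ)) = t from by
            rw [mul_comm, div_mul_cancel₀ _ (neg_ne_zero.mpr hne)],
          show -σ * (-1) = σ from by ring] at h
        exact h
      rw [sw, sw, sc, sc]
      have harg : -(e0 / 2 * (Sr - Sl)) / (-σ) = e0 := by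
        rw [h2σ]; field_simp
      rw [harg]
      exact mul_le_mul_of_nonneg_left (he0 _) (by linarith)
    · -- σ = 0
      have h1 : e0 / 2 * (Sr - Sl) = 0 := by rw [h2σ, hs]; ring
      rw [h1, hs]
      have hz : flatD L T W 0 0 0 0 (-0) = 0 := by simp [flatD]
      rw [hz]
      exact flatD_nonneg L T W hL hT _ _ _ _ _
    · -- σ > 0 : rescale by σ
      have hne : σ ≠ 0 := ne_of_gt hs
      have sc : ∀ t : ℝ, flatD L T W 0 0 t σ (-σ) =
          σ * flatD L T W 0 0 (t / σ) 1 (-1) := by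
        intro t
        have h := flatD_scale L T W 0 0 (t / σ) 1 (-1) σ (by linarith)
        rw [mul_zero, mul_one,
          show σ * (t / σ) = t from by rw [mul_comm, div_mul_cancel₀ _ hne],
          show σ * (-1) = -σ from by ring] at h
        exact h
      rw [sc, sc]
      have harg : e0 / 2 * (Sr - Sl) / σ = e0 := by
        rw [h2σ]; field_simp
      rw [harg]
      exact mul_le_mul_of_nonneg_left (he0 _) (by linarith)
  exact le_trans step1 step2
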